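/- Every well-nested Dyck picture is neutralizable: DW₁ ⊆ DN₁. Moreover the inclusion is strict, witnessed by the 2×4 picture with rows a a b b and c c d d, which is in DN₁ but not in DW₁. -/

import Mathlib

/-- The alphabet Δ₁ = {a, b, c, d}. -/
inductive Del : Type
  | a | b | c | d
deriving DecidableEq

/-- Row cancellation: pairs [a,b] and [c,d]. -/
def rowStep (w w' : List Del) : Prop :=
  ∃ (u v : List Del),
    (w = u ++ [Del.a, Del.b] ++ v ∨ w = u ++ [Del.c, Del.d] ++ v) ∧ w' = u ++ v

/-- The row Dyck language D^Row. -/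
def DRow (w : List Del) : Prop := Relation.ReflTransGen rowStep w []

/-- Column cancellation: pairs [a,c] and [b,d]. -/
def colStep (w w' : List Del) : Prop :=
  ∃ (u v : List Del),
    (w = u ++ [Del.a, Del.c] ++ v ∨ w = u ++ [Del.b, Del.d] ++ v) ∧ w' = u ++ v

/-- The column Dyck language D^Col. -/
def DCol (w : List Del) : Prop := Relation.ReflTransGen colStep w []

/-- Row i (of length n) of a picture. -/
def row (p : ℕ → ℕ → Del) (n i : ℕ) : List Del := (List.range n).map (p i)

/-- Column j (of length m) of a picture. -/
def col (p : ℕ → ℕ → Del) (m j : ℕ) : List Del :=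
  (List.range m).map (fun i => p i j)

/-- The Dyck crossword language DC₁: nonempty pictures all of whose rows
are in D^Row and all of whose columns are in D^Col. -/
def DC (m n : ℕ) (p : ℕ → ℕ → Del) : Prop :=
  1 ≤ m ∧ 1 ≤ n ∧ (∀ i < m, DRow (row p n i)) ∧ (∀ j < n, DCol (col p m j))

/-- Dyck words over the single matching pair [a,b] (used for the top row of
an accretion frame). -/
def abStep (w w' : List Del) : Prop :=
  ∃ (u v : List Del), w = u ++ [Del.a, Del.b] ++ v ∧ w' = u ++ v

def DyckAB (w : List Del) : Prop := Relation.ReflTransGen abStep w []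

/-- Dyck words over the single matching pair [a,c] (used for the left column
of an accretion frame). -/
def acStep (w w' : List Del) : Prop :=
  ∃ (u v : List Del), w = u ++ [Del.a, Del.c] ++ v ∧ w' = u ++ v

def DyckAC (w : List Del) : Prop := Relation.ReflTransGen acStep w []

/-- The map h_r : a ↦ c, b ↦ d. -/
def hr : Del → Del
  | Del.a => Del.c
  | Del.b => Del.d
  | x => x

/-- The map h_c : a ↦ b, c ↦ d. -/
def hc : Del → Del
  | Del.a => Del.b
  | Del.c => Del.d
  | x => x

def inDom (d : ℕ × ℕ × ℕ × ℕ) (r s : ℕ) : Prop :=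
  d.1 ≤ r ∧ r ≤ d.2.2.1 ∧ d.2.1 ≤ s ∧ s ≤ d.2.2.2

/-- The well-nested Dyck language DW₁: the smallest picture language
containing the empty picture and closed under nesting accretion and the
Simplot closure (tessellation). -/
inductive DW : ℕ → ℕ → (ℕ → ℕ → Del) → Prop
  | empty (p : ℕ → ℕ → Del) : DW 0 0 p
  | accrete (m n : ℕ) (p q : ℕ → ℕ → Del) (wr wc : List Del) :
      DW m n p → DyckAB wr → DyckAC wc → wr.length = n → wc.length = m →
      q 0 0 = Del.a → q 0 (n + 1) = Del.b →
      q (m + 1) 0 = Del.c → q (m + 1) (n + 1) = Del.d →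
      (∀ s < n, q 0 (s + 1) = wr.getD s Del.a) →
      (∀ s < n, q (m + 1) (s + 1) = hr (wr.getD s Del.a)) →
      (∀ r < m, q (r + 1) 0 = wc.getD r Del.a) →
      (∀ r < m, q (r + 1) (n + 1) = hc (wc.getD r Del.a)) →
      (∀ r < m, ∀ s < n, q (r + 1) (s + 1) = p r s) →
      DW (m + 2) (n + 2) q
  | simplot (m n : ℕ) (p : ℕ → ℕ → Del) (ds : Set (ℕ × ℕ × ℕ × ℕ)) :
      1 ≤ m → 1 ≤ n →
      (∀ d ∈ ds, d.1 ≤ d.2.2.1 ∧ d.2.2.1 < m ∧ d.2.1 ≤ d.2.2.2 ∧ d.2.2.2 < n) →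
      (∀ r < m, ∀ s < n, ∃! d, d ∈ ds ∧ inDom d r s) →
      (∀ d ∈ ds, DW (d.2.2.1 - d.1 + 1) (d.2.2.2 - d.2.1 + 1)
        (fun r s => p (d.1 + r) (d.2.1 + s))) →
      DW m n p

/-- The alphabet Δ₁ ∪ {N}. -/
inductive DelN : Type
  | a | b | c | d | N
deriving DecidableEq

def embed : Del → DelN
  | Del.a => DelN.a
  | Del.b => DelN.b
  | Del.c => DelN.c
  | Del.d => DelN.d

/-- One neutralization step inside an m×n picture: a subpicture of size at
least 2×2 whose four corners are a, b, c, d and whose remaining cells are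
all N is replaced by an all-N subpicture. -/
def nstep (m n : ℕ) (q q' : ℕ → ℕ → DelN) : Prop :=
  ∃ (i j i' j' : ℕ), i < i' ∧ j < j' ∧ i' < m ∧ j' < n ∧
    q i j = DelN.a ∧ q i j' = DelN.b ∧ q i' j = DelN.c ∧ q i' j' = DelN.d ∧
    (∀ r s, i ≤ r → r ≤ i' → j ≤ s → s ≤ j' →
      ¬((r = i ∨ r = i') ∧ (s = j ∨ s = j')) → q r s = DelN.N) ∧
    (∀ r s, (i ≤ r ∧ r ≤ i' ∧ j ≤ s ∧ s ≤ j') → q' r s = DelN.N) ∧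
    (∀ r s, ¬(i ≤ r ∧ r ≤ i' ∧ j ≤ s ∧ s ≤ j') → q' r s = q r s)

/-- The neutralizable Dyck language DN₁: nonempty pictures over Δ₁ that can
be transformed into the all-N picture by neutralization steps. -/
def DN (m n : ℕ) (p : ℕ → ℕ → Del) : Prop :=
  1 ≤ m ∧ 1 ≤ n ∧
    ∃ q : ℕ → ℕ → DelN,
      Relation.ReflTransGen (nstep m n) (fun r s => embed (p r s)) q ∧
      ∀ r < m, ∀ s < n, q r s = DelN.N

/-- The 2×4 picture with rows `a a b b` and `c c d d`. -/
def pN : ℕ → ℕ → Del := fun i j =>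
  if i = 0 then (if j ≤ 1 then Del.a else Del.b)
  else (if j ≤ 1 then Del.c else Del.d)

/-!
Neutralizability is proved along the inductive definition of DW₁. A neutralization step only
reads and writes inside its own subpicture, so a run on a block can be replayed inside any larger
picture; this neutralizes the tiles of a tessellation one after the other, and the inner picture
of an accretion. In the frame of an accretion, the top row is a Dyck word over `[a, b]` and the
bottom row its image under `h_r`; each cancellation `u a b v → u v` of the top word is realized
by neutralizing the full-height strip between the cancelled `a` and `b`, whose four corners are
`a, b, c, d` and whose other cells are already `N`. The left and right columns are handled in the
same way after transposing, and what remains is a single `a b / c d` rectangle.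

For strictness: the tiles of a two-row picture of DW₁ are themselves two rows high, and the
top-right corner of every DW₁ picture is `b`, so in the top row of a two-row DW₁ picture every `a`
is followed by `b`. The top row `a a b b` of `pN` is not of this form.
-/

namespace DelN

def hr : DelN → DelN
  | a => c
  | b => d
  | x => x

def hc : DelN → DelN
  | a => b
  | c => d
  | x => x

-- Transposing a picture exchanges the roles of the corner letters `b` and `c`.
def flip : DelN → DelN
  | b => c
  | c => b
  | x => x

@[simp] theorem flip_flip (x : DelN) : x.flip.flip = x := by cases x <;> rfl

@[simp] theorem flip_hc (x : DelN) : x.hc.flip = x.flip.hr := by cases x <;> rfl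

end DelN

def Del.flip : Del → Del
  | .b => .c
  | .c => .b
  | x => x

theorem embed_ne_N (x : Del) : embed x ≠ .N := by cases x <;> decide

theorem embed_hr (x : Del) : embed (hr x) = (embed x).hr := by cases x <;> rfl

theorem embed_hc (x : Del) : embed (hc x) = (embed x).hc := by cases x <;> rfl

theorem embed_flip (x : Del) : embed x.flip = (embed x).flip := by cases x <;> rfl

theorem DyckAC.map_flip {w : List Del} (hw : DyckAC w) : DyckAB (w.map Del.flip) := by
  refine Relation.ReflTransGen.lift (List.map Del.flip) (fun w w' ⟨u, v, h, h'⟩ => ?_) _ _ hw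
  exact ⟨u.map Del.flip, v.map Del.flip, by simp [h, Del.flip], by simp [h']⟩

theorem List.map_range_add_add {α : Type*} (f : ℕ → α) (a b c : ℕ) :
    (List.range (a + b + c)).map f = (List.range a).map f ++
      (List.range b).map (fun i => f (a + i)) ++ (List.range c).map (fun i => f (a + b + i)) := by
  simp [List.range_add, Function.comp_def, Nat.add_assoc]

theorem eq_append_replicate_N_of_filter_eq {L u v : List DelN} {x y : DelN}
    (h : L.filter (· != .N) = u ++ x :: y :: v) :
    ∃ A k B, L = A ++ (x :: List.replicate k .N ++ [y]) ++ B ∧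
      A.filter (· != .N) = u ∧ B.filter (· != .N) = v := by
  obtain ⟨L₁, L₂, rfl, h₁, h₂⟩ := List.filter_eq_append_iff.mp h
  obtain ⟨M₁, L₃, rfl, hM₁, -, h₃⟩ := List.filter_eq_cons_iff.mp h₂
  obtain ⟨M₂, B, rfl, hM₂, -, h₄⟩ := List.filter_eq_cons_iff.mp h₃
  have hM₂ : M₂ = List.replicate M₂.length .N :=
    List.eq_replicate_iff.mpr ⟨rfl, fun z hz => by simpa using hM₂ z hz⟩
  refine ⟨L₁ ++ M₁, M₂.length, B, ?_, ?_, h₄⟩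
  · rw [← hM₂]
    simp
  · rw [List.filter_append, h₁, List.filter_eq_nil_iff.mpr hM₁, List.append_nil]

theorem exists_pair_separated_by_N {n : ℕ} {t : ℕ → DelN} {u v : List DelN} {x y : DelN}
    (h : ((List.range n).map t).filter (· != .N) = u ++ x :: y :: v) :
    ∃ j k, j + k + 1 < n ∧ t j = x ∧ t (j + k + 1) = y ∧
      (∀ i, j < i → i < j + k + 1 → t i = .N) ∧
      ((List.range n).map (fun i => if j ≤ i ∧ i ≤ j + k + 1 then .N else t i)).filter
        (· != .N) = u ++ v := by
  obtain ⟨A, k, B, hL, hA, hB⟩ := eq_append_replicate_N_of_filter_eq h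
  obtain rfl : n = A.length + (k + 2) + B.length := by
    have := congrArg List.length hL
    simp at this
    omega
  rw [List.map_range_add_add] at hL
  obtain ⟨hAM, hB'⟩ := List.append_inj hL (by simp)
  obtain ⟨hA', hM⟩ := List.append_inj hAM (by simp)
  have hval : ∀ i (hi : i < k + 2),
      t (A.length + i) = (x :: List.replicate k .N ++ [y])[i]'(by simp; omega) := by
    intro i hi
    simp [← hM]
  refine ⟨A.length, k, by omega, by simpa using hval 0 (by omega),
    by simpa [Nat.add_assoc] using hval (k + 1) (by omega), fun i hi₁ hi₂ => ?_, ?_⟩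
  · obtain ⟨i, rfl⟩ := Nat.exists_eq_add_of_lt hi₁
    rw [Nat.add_assoc, hval (i + 1) (by omega)]
    simp [List.getElem_append_left (show i < (List.replicate k DelN.N).length by simp; omega)]
  · have e₁ : (List.range A.length).map
        (fun i => if A.length ≤ i ∧ i ≤ A.length + k + 1 then .N else t i) = A := by
      refine (List.map_congr_left fun i hi => if_neg ?_).trans hA'
      simp at hi
      omega
    have e₂ : (List.range (k + 2)).map (fun i =>
        if A.length ≤ A.length + i ∧ A.length + i ≤ A.length + k + 1 then .N
        else t (A.length + i)) = List.replicate (k + 2) .N := by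
      refine (List.map_congr_left fun i hi => if_pos ?_).trans (by simp)
      simp at hi
      omega
    have e₃ : (List.range B.length).map (fun i =>
        if A.length ≤ A.length + (k + 2) + i ∧ A.length + (k + 2) + i ≤ A.length + k + 1 then .N
        else t (A.length + (k + 2) + i)) = B := by
      refine (List.map_congr_left fun i _ => if_neg ?_).trans hB'
      omega
    rw [List.map_range_add_add, e₁, e₂, e₃]
    simp [hA, hB]

theorem filter_map_flip (L : List DelN) :
    (L.map DelN.flip).filter (· != .N) = (L.filter (· != .N)).map DelN.flip := by
  rw [List.filter_map]
  congr 2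
  funext x
  cases x <;> rfl

theorem filter_map_range_eq_map_embed {n : ℕ} {t : ℕ → DelN} {w : List Del}
    (hlen : w.length = n) (ht : ∀ s < n, t s = embed (w.getD s .a)) :
    ((List.range n).map t).filter (· != .N) = w.map embed := by
  have hmap : (List.range n).map t = w.map embed := by
    subst hlen
    apply List.ext_getElem <;> simp_all
  rw [hmap, List.filter_eq_self]
  simp [embed_ne_N]

section Neutralization

variable {m n : ℕ} {q q' : ℕ → ℕ → DelN}

theorem nstep_of_corners {i j i' j' : ℕ} (hi : i < i') (hj : j < j') (him : i' < m)
    (hjn : j' < n) (ha : q i j = .a) (hb : q i j' = .b) (hc : q i' j = .c) (hd : q i' j' = .d)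
    (hN : ∀ r s, i ≤ r → r ≤ i' → j ≤ s → s ≤ j' →
      ¬((r = i ∨ r = i') ∧ (s = j ∨ s = j')) → q r s = .N) :
    nstep m n q (fun r s => if i ≤ r ∧ r ≤ i' ∧ j ≤ s ∧ s ≤ j' then .N else q r s) :=
  ⟨i, j, i', j', hi, hj, him, hjn, ha, hb, hc, hd, hN, fun _ _ h => if_pos h,
    fun _ _ h => if_neg h⟩

namespace Picture

def paste (Q p : ℕ → ℕ → DelN) (i₀ j₀ h w : ℕ) : ℕ → ℕ → DelN := fun r s =>
  if i₀ ≤ r ∧ r < i₀ + h ∧ j₀ ≤ s ∧ s < j₀ + w then p (r - i₀) (s - j₀) else Q r s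

def transpose (q : ℕ → ℕ → DelN) : ℕ → ℕ → DelN := fun r s => (q s r).flip

@[simp] theorem transpose_transpose (q : ℕ → ℕ → DelN) : transpose (transpose q) = q := by
  funext r s
  simp [transpose]

theorem nstep_paste {h w i₀ j₀ : ℕ} {p p' : ℕ → ℕ → DelN} (Q : ℕ → ℕ → DelN)
    (hi : i₀ + h ≤ m) (hj : j₀ + w ≤ n) (hstep : nstep h w p p') :
    nstep m n (paste Q p i₀ j₀ h w) (paste Q p' i₀ j₀ h w) := by
  obtain ⟨i, j, i', j', hii, hjj, hih, hjw, ha, hb, hc, hd, hN, hin, hout⟩ := hstep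
  have hp : ∀ r s, r < h → s < w → paste Q p i₀ j₀ h w (i₀ + r) (j₀ + s) = p r s := by
    intro r s hr hs
    simp [paste, hr, hs]
  refine ⟨i₀ + i, j₀ + j, i₀ + i', j₀ + j', by omega, by omega, by omega, by omega,
    by rwa [hp _ _ (by omega) (by omega)], by rwa [hp _ _ (by omega) (by omega)],
    by rwa [hp _ _ (by omega) (by omega)], by rwa [hp _ _ (by omega) (by omega)], ?_, ?_, ?_⟩
  · intro r s h₁ h₂ h₃ h₄ hcorner
    simp only [paste]
    rw [if_pos (by omega)]
    exact hN _ _ (by omega) (by omega) (by omega) (by omega) (by omega)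
  · intro r s hbox
    simp only [paste]
    rw [if_pos (by omega)]
    exact hin _ _ (by omega)
  · intro r s hbox
    simp only [paste]
    split_ifs
    · exact hout _ _ (by omega)
    · rfl

theorem nstep_transpose (h : nstep m n q q') : nstep n m (transpose q) (transpose q') := by
  obtain ⟨i, j, i', j', hii, hjj, him, hjn, ha, hb, hc, hd, hN, hin, hout⟩ := h
  refine ⟨j, i, j', i', hjj, hii, hjn, him, by simp [transpose, ha, DelN.flip],
    by simp [transpose, hc, DelN.flip], by simp [transpose, hb, DelN.flip],
    by simp [transpose, hd, DelN.flip], ?_, ?_, ?_⟩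
  · intro r s h₁ h₂ h₃ h₄ hcorner
    simp only [transpose]
    rw [hN s r h₃ h₄ h₁ h₂ (by tauto)]
    rfl
  · intro r s hbox
    simp only [transpose]
    rw [hin s r (by omega)]
    rfl
  · intro r s hbox
    simp only [transpose]
    rw [hout s r (by omega)]

theorem reflTransGen_nstep_paste {h w i₀ j₀ : ℕ} {p p' : ℕ → ℕ → DelN} (Q : ℕ → ℕ → DelN)
    (hi : i₀ + h ≤ m) (hj : j₀ + w ≤ n) (hrun : Relation.ReflTransGen (nstep h w) p p') :
    Relation.ReflTransGen (nstep m n) (paste Q p i₀ j₀ h w) (paste Q p' i₀ j₀ h w) :=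
  Relation.ReflTransGen.lift (fun p => paste Q p i₀ j₀ h w)
    (fun _ _ => nstep_paste Q hi hj) p p' hrun

theorem reflTransGen_nstep_transpose (hrun : Relation.ReflTransGen (nstep m n) q q') :
    Relation.ReflTransGen (nstep n m) (transpose q) (transpose q') :=
  Relation.ReflTransGen.lift transpose (fun _ _ => nstep_transpose) q q' hrun

end Picture

open Picture

theorem DN.reflTransGen_nstep_clear_block {h w i₀ j₀ : ℕ} {p : ℕ → ℕ → Del} (hp : DN h w p)
    (hi : i₀ + h ≤ m) (hj : j₀ + w ≤ n) {Q : ℕ → ℕ → DelN}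
    (hQ : ∀ r < h, ∀ s < w, Q (i₀ + r) (j₀ + s) = embed (p r s)) :
    Relation.ReflTransGen (nstep m n) Q
      (fun r s => if i₀ ≤ r ∧ r < i₀ + h ∧ j₀ ≤ s ∧ s < j₀ + w then .N else Q r s) := by
  obtain ⟨-, -, p', hrun, hN⟩ := hp
  have hstart : paste Q (fun r s => embed (p r s)) i₀ j₀ h w = Q := by
    funext r s
    unfold paste
    split_ifs with hbox
    · obtain ⟨r, rfl⟩ := Nat.exists_eq_add_of_le hbox.1
      obtain ⟨s, rfl⟩ := Nat.exists_eq_add_of_le hbox.2.2.1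
      simp [hQ r (by omega) s (by omega)]
    · rfl
  have hend : paste Q p' i₀ j₀ h w =
      fun r s => if i₀ ≤ r ∧ r < i₀ + h ∧ j₀ ≤ s ∧ s < j₀ + w then .N else Q r s := by
    funext r s
    unfold paste
    split_ifs
    · exact hN _ (by omega) _ (by omega)
    · rfl
  simpa only [hstart, hend] using reflTransGen_nstep_paste Q hi hj hrun

theorem nstep_clear_strip {j j' : ℕ} (hj : 1 ≤ j) (hjj' : j < j') (hj'n : j' ≤ n)
    (hint : ∀ r s, 1 ≤ r → r ≤ m → 1 ≤ s → s ≤ n → q r s = .N)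
    (hbot : ∀ s, 1 ≤ s → s ≤ n → q (m + 1) s = (q 0 s).hr)
    (ha : q 0 j = .a) (hb : q 0 j' = .b) (hN : ∀ s, j < s → s < j' → q 0 s = .N) :
    nstep (m + 2) (n + 2) q
      (fun r s => if 0 ≤ r ∧ r ≤ m + 1 ∧ j ≤ s ∧ s ≤ j' then .N else q r s) :=
  nstep_of_corners (by omega) hjj' (by omega) (by omega) ha hb
    (by rw [hbot j hj (by omega), ha]; rfl) (by rw [hbot j' (by omega) hj'n, hb]; rfl)
    fun r s _ _ hs₁ hs₂ hcorner => by
      rcases (show r = 0 ∨ (1 ≤ r ∧ r ≤ m) ∨ r = m + 1 by omega) with rfl | hr | rfl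
      · exact hN s (by omega) (by omega)
      · exact hint r s hr.1 hr.2 (by omega) (by omega)
      · rw [hbot s (by omega) (by omega), hN s (by omega) (by omega)]
        rfl

theorem reflTransGen_nstep_clear_top_bottom {w : List Del} (hw : DyckAB w) :
    ∀ q : ℕ → ℕ → DelN, (∀ r s, 1 ≤ r → r ≤ m → 1 ≤ s → s ≤ n → q r s = .N) →
      ((List.range n).map (fun s => q 0 (s + 1))).filter (· != .N) = w.map embed →
      (∀ s, 1 ≤ s → s ≤ n → q (m + 1) s = (q 0 s).hr) →
      Relation.ReflTransGen (nstep (m + 2) (n + 2)) q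
        (fun r s => if r ≤ m + 1 ∧ 1 ≤ s ∧ s ≤ n then .N else q r s) := by
  induction hw using Relation.ReflTransGen.head_induction_on with
  | refl =>
    intro q hint htop hbot
    have htopN : ∀ s, 1 ≤ s → s ≤ n → q 0 s = .N := by
      intro s hs₁ hs₂
      obtain ⟨s, rfl⟩ := Nat.exists_eq_add_one_of_ne_zero (show s ≠ 0 by omega)
      simpa using List.filter_eq_nil_iff.mp htop _
        (List.mem_map_of_mem (List.mem_range.mpr (by omega)))
    convert Relation.ReflTransGen.refl using 1
    funext r s
    split_ifs with h
    · rcases (show r = 0 ∨ (1 ≤ r ∧ r ≤ m) ∨ r = m + 1 by omega) with rfl | hr | rfl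
      · exact (htopN s h.2.1 h.2.2).symm
      · exact (hint r s hr.1 hr.2 h.2.1 h.2.2).symm
      · rw [hbot s h.2.1 h.2.2, htopN s h.2.1 h.2.2]
        rfl
    · rfl
  | head hstep _ ih =>
    obtain ⟨u, v, rfl, rfl⟩ := hstep
    intro q hint htop hbot
    obtain ⟨j, k, hjk, ha, hb, hN, htop'⟩ :=
      exists_pair_separated_by_N (x := .a) (y := .b) (by simpa [embed] using htop)
    refine .head (nstep_clear_strip (j := j + 1) (j' := j + k + 2) (by omega) (by omega)
      (by omega) hint hbot ha hb fun s hs₁ hs₂ => ?_) ?_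
    · obtain ⟨s, rfl⟩ := Nat.exists_eq_add_one_of_ne_zero (show s ≠ 0 by omega)
      exact hN s (by omega) (by omega)
    convert ih _ ?_ ?_ ?_ using 1
    · funext r s
      split_ifs <;> first | rfl | omega
    · intro r s hr₁ hr₂ hs₁ hs₂
      split_ifs
      · rfl
      · exact hint r s hr₁ hr₂ hs₁ hs₂
    · rw [List.map_append, ← htop']
      congr 2
      funext s
      simp only [Nat.zero_le, true_and]
      split_ifs <;> first | rfl | omega
    · intro s hs₁ hs₂
      simp only [Nat.zero_le, le_refl, true_and]
      split_ifs
      · rfl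
      · exact hbot s hs₁ hs₂

theorem reflTransGen_nstep_clear_left_right {w : List Del} (hw : DyckAC w) (q : ℕ → ℕ → DelN)
    (hint : ∀ r s, 1 ≤ r → r ≤ m → 1 ≤ s → s ≤ n → q r s = .N)
    (hleft : ((List.range m).map (fun r => q (r + 1) 0)).filter (· != .N) = w.map embed)
    (hright : ∀ r, 1 ≤ r → r ≤ m → q r (n + 1) = (q r 0).hc) :
    Relation.ReflTransGen (nstep (m + 2) (n + 2)) q
      (fun r s => if 1 ≤ r ∧ r ≤ m ∧ s ≤ n + 1 then .N else q r s) := by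
  have hrun := reflTransGen_nstep_transpose <|
    reflTransGen_nstep_clear_top_bottom (m := n) (n := m) hw.map_flip (transpose q)
      (fun r s hr₁ hr₂ hs₁ hs₂ => by simp [transpose, hint s r hs₁ hs₂ hr₁ hr₂, DelN.flip])
      (by
        rw [show (fun s => transpose q 0 (s + 1)) = DelN.flip ∘ fun r => q (r + 1) 0 from rfl,
          ← List.map_map, filter_map_flip, hleft]
        simp [embed_flip])
      (fun s hs₁ hs₂ => by simp [transpose, hright s hs₁ hs₂])
  rw [transpose_transpose] at hrun
  convert hrun using 1
  funext r s
  simp only [transpose]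
  split_ifs <;> first | rfl | omega | simp

end Neutralization

theorem DN.accrete {m n : ℕ} {p q : ℕ → ℕ → Del} {wr wc : List Del}
    (hp : 1 ≤ m → 1 ≤ n → DN m n p) (hwr : DyckAB wr) (hwc : DyckAC wc)
    (hlr : wr.length = n) (hlc : wc.length = m)
    (h00 : q 0 0 = .a) (h0n : q 0 (n + 1) = .b) (hm0 : q (m + 1) 0 = .c)
    (hmn : q (m + 1) (n + 1) = .d)
    (htop : ∀ s < n, q 0 (s + 1) = wr.getD s .a)
    (hbot : ∀ s < n, q (m + 1) (s + 1) = hr (wr.getD s .a))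
    (hleft : ∀ r < m, q (r + 1) 0 = wc.getD r .a)
    (hright : ∀ r < m, q (r + 1) (n + 1) = hc (wc.getD r .a))
    (hinner : ∀ r < m, ∀ s < n, q (r + 1) (s + 1) = p r s) :
    DN (m + 2) (n + 2) q := by
  set Q₀ : ℕ → ℕ → DelN := fun r s => embed (q r s)
  set Q₁ : ℕ → ℕ → DelN := fun r s =>
    if 1 ≤ r ∧ r < m + 1 ∧ 1 ≤ s ∧ s < n + 1 then .N else Q₀ r s
  set Q₂ : ℕ → ℕ → DelN := fun r s => if r ≤ m + 1 ∧ 1 ≤ s ∧ s ≤ n then .N else Q₁ r s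
  set Q₃ : ℕ → ℕ → DelN := fun r s => if 1 ≤ r ∧ r ≤ m ∧ s ≤ n + 1 then .N else Q₂ r s
  have hrun₁ : Relation.ReflTransGen (nstep (m + 2) (n + 2)) Q₀ Q₁ := by
    by_cases hmn : 1 ≤ m ∧ 1 ≤ n
    · simp only [Q₁, ← Nat.add_comm 1]
      refine (hp hmn.1 hmn.2).reflTransGen_nstep_clear_block (by omega) (by omega)
        fun r hr s hs => ?_
      simp only [Q₀, Nat.add_comm 1, hinner r hr s hs]
    · convert Relation.ReflTransGen.refl using 1
      funext r s
      exact if_neg (by omega)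
  have hrun₂ : Relation.ReflTransGen (nstep (m + 2) (n + 2)) Q₁ Q₂ := by
    refine reflTransGen_nstep_clear_top_bottom hwr Q₁ (fun r s _ _ _ _ => if_pos (by omega))
      (filter_map_range_eq_map_embed hlr fun s hs => ?_) fun s hs₁ hs₂ => ?_
    · simp [Q₁, Q₀, htop s hs]
    · obtain ⟨s, rfl⟩ := Nat.exists_eq_add_one_of_ne_zero (show s ≠ 0 by omega)
      simp [Q₁, Q₀, htop s (by omega), hbot s (by omega), embed_hr]
  have hrun₃ : Relation.ReflTransGen (nstep (m + 2) (n + 2)) Q₂ Q₃ := by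
    refine reflTransGen_nstep_clear_left_right hwc Q₂ (fun r s _ _ _ _ => if_pos (by omega))
      (filter_map_range_eq_map_embed hlc fun r hr => ?_) fun r hr₁ hr₂ => ?_
    · simp [Q₂, Q₁, Q₀, hleft r hr]
    · obtain ⟨r, rfl⟩ := Nat.exists_eq_add_one_of_ne_zero (show r ≠ 0 by omega)
      simp [Q₂, Q₁, Q₀, hleft r (by omega), hright r (by omega), embed_hc]
  have hstep₄ := nstep_of_corners (m := m + 2) (n := n + 2) (q := Q₃) (i := 0) (j := 0)
    (i' := m + 1) (j' := n + 1) (by omega) (by omega) (by omega) (by omega)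
    (by simp [Q₃, Q₂, Q₁, Q₀, h00, embed]) (by simp [Q₃, Q₂, Q₁, Q₀, h0n, embed])
    (by simp [Q₃, Q₂, Q₁, Q₀, hm0, embed]) (by simp [Q₃, Q₂, Q₁, Q₀, hmn, embed])
    (fun r s _ _ _ _ hcorner => by simp only [Q₃, Q₂, Q₁]; split_ifs <;> first | rfl | omega)
  exact ⟨by omega, by omega, _, hrun₁.trans (hrun₂.trans (hrun₃.tail hstep₄)),
    fun r hr s hs => if_pos (by omega)⟩

open Classical in
theorem reflTransGen_nstep_clear_tiles {m n : ℕ} {p : ℕ → ℕ → Del} {ds : Set (ℕ × ℕ × ℕ × ℕ)}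
    (hfin : ds.Finite)
    (hbounds : ∀ d ∈ ds, d.1 ≤ d.2.2.1 ∧ d.2.2.1 < m ∧ d.2.1 ≤ d.2.2.2 ∧ d.2.2.2 < n)
    (huniq : ∀ r < m, ∀ s < n, ∃! d, d ∈ ds ∧ inDom d r s)
    (htiles : ∀ d ∈ ds, DN (d.2.2.1 - d.1 + 1) (d.2.2.2 - d.2.1 + 1)
      (fun r s => p (d.1 + r) (d.2.1 + s))) :
    Relation.ReflTransGen (nstep m n) (fun r s => embed (p r s))
      (fun r s => if ∃ d ∈ ds, inDom d r s then .N else embed (p r s)) := by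
  refine hfin.induction_on_subset
    (motive := fun T _ => Relation.ReflTransGen (nstep m n) (fun r s => embed (p r s))
      (fun r s => if ∃ d ∈ T, inDom d r s then .N else embed (p r s))) _ ?_ ?_
  · convert Relation.ReflTransGen.refl using 1
    simp
  · intro d T hd hT hdT ih
    have hb := hbounds d hd
    have hdisj : ∀ r s, inDom d r s → ¬∃ d' ∈ T, inDom d' r s := by
      rintro r s hr ⟨d', hd', hr'⟩
      obtain ⟨e, -, he⟩ := huniq r (by unfold inDom at hr; omega) s (by unfold inDom at hr; omega)
      exact hdT ((he d ⟨hd, hr⟩).trans (he d' ⟨hT hd', hr'⟩).symm ▸ hd')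
    refine ih.trans ?_
    convert (htiles d hd).reflTransGen_nstep_clear_block (m := m) (n := n) (i₀ := d.1)
      (j₀ := d.2.1) (Q := fun r s => if ∃ d ∈ T, inDom d r s then .N else embed (p r s))
      (by omega) (by omega)
      fun r hr s hs => if_neg (hdisj (d.1 + r) (d.2.1 + s) ⟨by omega, by omega, by omega,
        by omega⟩) using 1
    funext r s
    have hbox : (d.1 ≤ r ∧ r < d.1 + (d.2.2.1 - d.1 + 1) ∧
        d.2.1 ≤ s ∧ s < d.2.1 + (d.2.2.2 - d.2.1 + 1)) ↔ inDom d r s := by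
      unfold inDom
      omega
    simp only [hbox, Set.mem_insert_iff, exists_eq_or_imp]
    split_ifs <;> simp_all

theorem DN.simplot {m n : ℕ} {p : ℕ → ℕ → Del} {ds : Set (ℕ × ℕ × ℕ × ℕ)}
    (hm : 1 ≤ m) (hn : 1 ≤ n)
    (hbounds : ∀ d ∈ ds, d.1 ≤ d.2.2.1 ∧ d.2.2.1 < m ∧ d.2.1 ≤ d.2.2.2 ∧ d.2.2.2 < n)
    (huniq : ∀ r < m, ∀ s < n, ∃! d, d ∈ ds ∧ inDom d r s)
    (htiles : ∀ d ∈ ds, DN (d.2.2.1 - d.1 + 1) (d.2.2.2 - d.2.1 + 1)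
      (fun r s => p (d.1 + r) (d.2.1 + s))) :
    DN m n p := by
  have hfin : ds.Finite :=
    ((Set.finite_Iio m).prod ((Set.finite_Iio n).prod
      ((Set.finite_Iio m).prod (Set.finite_Iio n)))).subset fun d hd => by
        have := hbounds d hd
        simp only [Set.mem_prod, Set.mem_Iio]
        omega
  refine ⟨hm, hn, _, reflTransGen_nstep_clear_tiles hfin hbounds huniq htiles,
    fun r hr s hs => if_pos ?_⟩
  obtain ⟨d, hd, -⟩ := huniq r hr s hs
  exact ⟨d, hd⟩

namespace DW

variable {m n : ℕ} {p : ℕ → ℕ → Del}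

theorem toDN (h : DW m n p) : 1 ≤ m → 1 ≤ n → DN m n p := by
  induction h with
  | empty => intro h; omega
  | accrete m n p q wr wc _ hwr hwc hlr hlc h00 h0n hm0 hmn htop hbot hleft hright hinner ih =>
    exact fun _ _ => DN.accrete ih hwr hwc hlr hlc h00 h0n hm0 hmn htop hbot hleft hright hinner
  | simplot m n p ds hm hn hbounds huniq _ ih =>
    exact fun _ _ => DN.simplot hm hn hbounds huniq fun d hd => ih d hd (by omega) (by omega)

theorem cols_eq_zero (h : DW 0 n p) : n = 0 := by
  generalize hm : 0 = m at h
  cases h <;> omega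

theorem rows_ne_one (h : DW m n p) : m ≠ 1 := by
  induction h with
  | empty => omega
  | accrete => omega
  | simplot m n p ds hm hn hbounds huniq _ ih =>
    intro hm1
    obtain ⟨d, ⟨hd, hdom⟩, -⟩ := huniq 0 hm 0 hn
    have := hbounds d hd
    exact ih d hd (by unfold inDom at hdom; omega)

theorem top_right_eq_b (h : DW m n p) : 1 ≤ m → p 0 (n - 1) = .b := by
  induction h with
  | empty => omega
  | accrete m n p q _ _ _ _ _ _ _ _ h0n => exact fun _ => h0n
  | simplot m n p ds hm hn hbounds huniq _ ih =>
    intro _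
    obtain ⟨⟨i, j, i', j'⟩, ⟨hd, hdom⟩, -⟩ := huniq 0 hm (n - 1) (by omega)
    have := hbounds _ hd
    unfold inDom at hdom
    simp only at this hdom
    have htile := ih _ hd (by omega)
    simp only at htile
    rwa [show i = 0 by omega, show j + (j' - j + 1 - 1) = n - 1 by omega] at htile

theorem two_rows_a_succ_eq_b (h : DW m n p) :
    m = 2 → ∀ s, s + 1 < n → p 0 s = .a → p 0 (s + 1) = .b := by
  induction h with
  | empty => omega
  | accrete m n p q _ _ hp _ _ _ _ h00 h0n =>
    intro hm s hs _
    obtain rfl : m = 0 := by omega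
    obtain rfl := hp.cols_eq_zero
    obtain rfl : s = 0 := by omega
    exact h0n
  | simplot m n p ds hm hn hbounds huniq htiles ih =>
    intro hm2 s hs hsa
    obtain ⟨⟨i, j, i', j'⟩, ⟨hd, hdom⟩, -⟩ := huniq 0 (by omega) s (by omega)
    have := hbounds _ hd
    unfold inDom at hdom
    simp only at this hdom
    obtain rfl : i = 0 := by omega
    obtain rfl : i' = 1 := by
      have := (htiles _ hd).rows_ne_one
      simp only at this
      omega
    rcases (show s = j' ∨ s + 1 ≤ j' by omega) with rfl | hs'
    · have := (htiles _ hd).top_right_eq_b (by omega)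
      simp only [show j + (s - j + 1 - 1) = s by omega, hsa] at this
      cases this
    · have := ih _ hd rfl (s - j) (by dsimp only; omega)
      simp only [Nat.zero_add, show j + (s - j) = s by omega,
        show j + (s - j + 1) = s + 1 by omega] at this
      exact this hsa

end DW

theorem DN_pN : DN 2 4 pN := by
  have h₁ := nstep_of_corners (m := 2) (n := 4) (q := fun r s => embed (pN r s))
    (i := 0) (j := 1) (i' := 1) (j' := 2) (by omega) (by omega) (by omega) (by omega)
    rfl rfl rfl rfl (fun r s _ _ _ _ h => by omega)
  refine ⟨by omega, by omega, _, .head h₁ (.single (nstep_of_corners (i := 0) (j := 0)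
    (i' := 1) (j' := 3) (by omega) (by omega) (by omega) (by omega) rfl rfl rfl rfl
    fun r s _ _ _ _ h => if_pos (by omega))), fun r hr s hs => if_pos (by omega)⟩

/-- Every (nonempty) well-nested Dyck picture is neutralizable, and the
inclusion DW₁ ⊆ DN₁ is strict, witnessed by the 2×4 picture with rows
`aabb`, `ccdd`. -/
theorem DW_strictSubset_DN :
    (∀ (m n : ℕ) (p : ℕ → ℕ → Del), DW m n p → 1 ≤ m → 1 ≤ n → DN m n p) ∧
    DN 2 4 pN ∧ ¬ DW 2 4 pN :=
  ⟨fun _ _ _ h => h.toDN, DN_pN,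
    fun h => absurd (h.two_rows_a_succ_eq_b rfl 0 (by omega) rfl) (by decide)⟩
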